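/- arXiv:0901.4041 — 3 statements merged into one kernel-verified Lean document; each statement's English description precedes it below -/
import Mathlib

section
/- Let W : M^{3×3} → [0,+∞] satisfy: W is finite-valued and of class C¹ on M^{3×3}_+; W ≥ 0 everywhere and W(Id) = 0; W is finite-valued and of class C² on the open δ-neighbourhood {F : dist(F,SO(3)) < δ} of SO(3) for some δ > 0; and the growth condition |DW(F)Fᵀ| ≤ k(W(F)+1) for every F ∈ M^{3×3}_+, for some k > 0. Then there exists a constant C > 0 (depending only on W) such that for every t ∈ (0,1] and every G ∈ M^{3×3} with det(Id + tG) > 0, the matrix E := t⁻¹ DW(Id + tG)(Id + tG)ᵀ satisfies |E| ≤ C( t⁻¹ W(Id + tG) + |G| ). -/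
open Matrix MeasureTheory Filter Topology
open scoped ENNReal

noncomputable section

attribute [local instance] Matrix.normedAddCommGroup Matrix.normedSpace

/-- The Frobenius inner product `A : B = tr (Aᵀ B) = ∑ᵢⱼ Aᵢⱼ Bᵢⱼ`. -/
def frobInner {n : ℕ} (A B : Matrix (Fin n) (Fin n) ℝ) : ℝ := ∑ i, ∑ j, A i j * B i j

/-- The Frobenius norm `|A| = (A : A)^{1/2}`. -/
def frobNorm {n : ℕ} (A : Matrix (Fin n) (Fin n) ℝ) : ℝ := Real.sqrt (frobInner A A)

/-- The gradient of a function on 3×3 matrices with respect to the Frobenius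
inner product: `(DW F)ᵢⱼ = ∂W/∂Fᵢⱼ`. -/
def matGrad (w : Matrix (Fin 3) (Fin 3) ℝ → ℝ) (F : Matrix (Fin 3) (Fin 3) ℝ) :
    Matrix (Fin 3) (Fin 3) ℝ :=
  fun i j => fderiv ℝ w F (Matrix.single i j 1)

/-- The set of proper rotations SO(3). -/
def SO3 : Set (Matrix (Fin 3) (Fin 3) ℝ) := {R | Rᵀ * R = 1 ∧ R.det = 1}

/-- The real-valued function associated to an extended-real-valued energy density. -/
def wr (W : Matrix (Fin 3) (Fin 3) ℝ → ℝ≥0∞) : Matrix (Fin 3) (Fin 3) ℝ → ℝ :=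
  fun F => (W F).toReal

/-- The Frobenius distance from a matrix to SO(3). -/
def distSO3 (F : Matrix (Fin 3) (Fin 3) ℝ) : ℝ :=
  sInf ((fun R => frobNorm (F - R)) '' SO3)

/-! Since `0 ≤ W` and `W(Id) = 0`, the identity is a minimum, so `DW(Id) = 0`; as `W` is `C²`
near `Id`, this gives `|DW(F)| ≤ K |F - Id|` on a ball of radius `r` around `Id`. If `t|G| ≤ r`
this bounds `|E|` by a multiple of `|G|`. Otherwise `t⁻¹ < |G| / r`, and the growth condition
gives `|E| ≤ k t⁻¹ (W(Id + tG) + 1) ≤ k t⁻¹ W(Id + tG) + (k / r) |G|`. -/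

/- Stated pointwise in `v`: under the local sup-norm instance on matrices, instance search does
not find the operator norm on `Matrix _ _ ℝ →L[ℝ] ℝ`. -/
theorem IsLocalMin.exists_abs_fderiv_apply_le {E : Type*} [NormedAddCommGroup E]
    [NormedSpace ℝ E] {f : E → ℝ} {a : E} (hmin : IsLocalMin f a) (hf : ContDiffAt ℝ 2 f a) :
    ∃ K : NNReal, ∃ r > 0, ∀ x ∈ Metric.closedBall a r, ∀ v,
      |fderiv ℝ f x v| ≤ K * ‖x - a‖ * ‖v‖ := by
  obtain ⟨K, s, hs, hK⟩ := (hf.fderiv_right (m := 1) le_rfl).exists_lipschitzOnWith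
  obtain ⟨r, hr, hrs⟩ := Metric.nhds_basis_closedBall.mem_iff.1 hs
  refine ⟨K, r, hr, fun x hx v => ?_⟩
  have hderiv : ‖fderiv ℝ f x‖ ≤ K * ‖x - a‖ := by
    simpa [hmin.fderiv_eq_zero, dist_eq_norm] using
      hK.dist_le_mul x (hrs hx) a (hrs (Metric.mem_closedBall_self hr.le))
  simpa using (fderiv ℝ f x).le_of_opNorm_le hderiv v

namespace Matrix

variable {n : ℕ}

lemma norm_one_le : ‖(1 : Matrix (Fin n) (Fin n) ℝ)‖ ≤ 1 :=
  (Matrix.norm_le_iff zero_le_one).2 fun i j => by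
    rw [Matrix.one_apply]; split_ifs <;> simp

lemma norm_single_one_le (i j : Fin n) : ‖Matrix.single i j (1 : ℝ)‖ ≤ 1 :=
  (Matrix.norm_le_iff zero_le_one).2 fun i' j' => by
    by_cases h : i = i' ∧ j = j'
    · obtain ⟨rfl, rfl⟩ := h; simp
    · simp [Matrix.single_apply_of_ne i j (1 : ℝ) i' j' h]

end Matrix

section FrobeniusNorm

variable {n : ℕ}

lemma frobNorm_eq_frobenius_norm (A : Matrix (Fin n) (Fin n) ℝ) :
    frobNorm A = @Norm.norm _ Matrix.frobeniusSeminormedAddCommGroup.toNorm A := by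
  let := @Matrix.frobeniusSeminormedAddCommGroup (Fin n) (Fin n) ℝ _ _ _
  rw [Matrix.frobenius_norm_def, frobNorm, frobInner, Real.sqrt_eq_rpow]
  simp [← sq]

lemma frobNorm_nonneg (A : Matrix (Fin n) (Fin n) ℝ) : 0 ≤ frobNorm A :=
  Real.sqrt_nonneg _

lemma frobNorm_mul_le (A B : Matrix (Fin n) (Fin n) ℝ) :
    frobNorm (A * B) ≤ frobNorm A * frobNorm B := by
  simp only [frobNorm_eq_frobenius_norm]
  exact Matrix.frobenius_norm_mul A B

lemma frobNorm_transpose (A : Matrix (Fin n) (Fin n) ℝ) : frobNorm Aᵀ = frobNorm A := by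
  simp only [frobNorm_eq_frobenius_norm]
  exact Matrix.frobenius_norm_transpose A

lemma frobNorm_smul (c : ℝ) (A : Matrix (Fin n) (Fin n) ℝ) :
    frobNorm (c • A) = |c| * frobNorm A := by
  simp only [frobNorm_eq_frobenius_norm]
  exact (@norm_smul ℝ (Matrix (Fin n) (Fin n) ℝ) _ Matrix.frobeniusSeminormedAddCommGroup.toNorm _
    Matrix.frobeniusNormSMulClass c A).trans (by rw [Real.norm_eq_abs])

lemma sq_le_frobInner_self (A : Matrix (Fin n) (Fin n) ℝ) (i j : Fin n) :
    A i j ^ 2 ≤ frobInner A A :=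
  calc A i j ^ 2 ≤ ∑ j', A i j' * A i j' := by
        simpa [sq] using Finset.single_le_sum (f := fun j' => A i j' * A i j')
          (fun _ _ => mul_self_nonneg _) (Finset.mem_univ j)
    _ ≤ frobInner A A := Finset.single_le_sum (f := fun i' => ∑ j', A i' j' * A i' j')
          (fun _ _ => Finset.sum_nonneg fun _ _ => mul_self_nonneg _) (Finset.mem_univ i)

lemma norm_le_frobNorm (A : Matrix (Fin n) (Fin n) ℝ) : ‖A‖ ≤ frobNorm A := by
  refine (Matrix.norm_le_iff (frobNorm_nonneg A)).2 fun i j => ?_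
  rw [Real.norm_eq_abs, ← Real.sqrt_sq_eq_abs]
  exact Real.sqrt_le_sqrt (sq_le_frobInner_self A i j)

lemma frobNorm_le_mul_norm (A : Matrix (Fin n) (Fin n) ℝ) : frobNorm A ≤ n * ‖A‖ := by
  have h : frobInner A A ≤ (n * ‖A‖) ^ 2 :=
    calc frobInner A A ≤ ∑ _i : Fin n, ∑ _j : Fin n, ‖A‖ ^ 2 :=
          Finset.sum_le_sum fun i _ => Finset.sum_le_sum fun j _ => by
            rw [← sq, ← sq_abs, ← Real.norm_eq_abs]
            exact pow_le_pow_left₀ (norm_nonneg _) (Matrix.norm_entry_le_entrywise_sup_norm A) 2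
      _ = (n * ‖A‖) ^ 2 := by
          simp only [Finset.sum_const, Finset.card_univ, Fintype.card_fin, nsmul_eq_mul]; ring
  calc frobNorm A ≤ Real.sqrt ((n * ‖A‖) ^ 2) := Real.sqrt_le_sqrt h
    _ = n * ‖A‖ := Real.sqrt_sq (by positivity)

lemma frobNorm_mul_transpose_le (A B : Matrix (Fin n) (Fin n) ℝ) :
    frobNorm (A * Bᵀ) ≤ n ^ 2 * ‖A‖ * ‖B‖ :=
  calc frobNorm (A * Bᵀ) ≤ frobNorm A * frobNorm B := by
        simpa only [frobNorm_transpose] using frobNorm_mul_le A Bᵀ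
    _ ≤ (n * ‖A‖) * (n * ‖B‖) :=
        mul_le_mul (frobNorm_le_mul_norm A) (frobNorm_le_mul_norm B) (frobNorm_nonneg B)
          (by positivity)
    _ = n ^ 2 * ‖A‖ * ‖B‖ := by ring

end FrobeniusNorm

lemma norm_matGrad_le {w : Matrix (Fin 3) (Fin 3) ℝ → ℝ} {F : Matrix (Fin 3) (Fin 3) ℝ}
    {c : ℝ} (hc : 0 ≤ c) (h : ∀ V, |fderiv ℝ w F V| ≤ c * ‖V‖) : ‖matGrad w F‖ ≤ c :=
  (Matrix.norm_le_iff hc).2 fun i j =>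
    (h _).trans (mul_le_of_le_one_right hc (Matrix.norm_single_one_le i j))

lemma one_mem_SO3 : (1 : Matrix (Fin 3) (Fin 3) ℝ) ∈ SO3 := ⟨by simp, by simp⟩

lemma distSO3_le_frobNorm_sub {F R : Matrix (Fin 3) (Fin 3) ℝ} (hR : R ∈ SO3) :
    distSO3 F ≤ frobNorm (F - R) :=
  csInf_le ⟨0, by rintro _ ⟨R, _, rfl⟩; exact frobNorm_nonneg _⟩ ⟨R, hR, rfl⟩

lemma setOf_distSO3_lt_mem_nhds_one {δ : ℝ} (hδ : 0 < δ) :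
    {F | distSO3 F < δ} ∈ 𝓝 (1 : Matrix (Fin 3) (Fin 3) ℝ) :=
  mem_of_superset (Metric.ball_mem_nhds 1 (by positivity : 0 < δ / 3)) fun F hF =>
    calc distSO3 F ≤ frobNorm (F - 1) := distSO3_le_frobNorm_sub one_mem_SO3
      _ ≤ 3 * ‖F - 1‖ := by exact_mod_cast frobNorm_le_mul_norm _
      _ < δ := by rw [Metric.mem_ball, dist_eq_norm] at hF; linarith

section Stress

variable {w : Matrix (Fin 3) (Fin 3) ℝ → ℝ} {t : ℝ} {G : Matrix (Fin 3) (Fin 3) ℝ}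

lemma scaled_stress_le_of_near {K r : ℝ} (hK0 : 0 ≤ K)
    (hK : ∀ F ∈ Metric.closedBall 1 r, ‖matGrad w F‖ ≤ K * ‖F - 1‖)
    (ht : 0 < t) (hG : t * frobNorm G ≤ r) :
    t⁻¹ * frobNorm (matGrad w (1 + t • G) * (1 + t • G)ᵀ) ≤ 9 * K * (1 + r) * frobNorm G := by
  have hsub : ‖(1 + t • G) - 1‖ ≤ t * frobNorm G := by
    rw [add_sub_cancel_left, norm_smul, Real.norm_eq_abs, abs_of_pos ht]
    exact mul_le_mul_of_nonneg_left (norm_le_frobNorm G) ht.le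
  have hgrad : ‖matGrad w (1 + t • G)‖ ≤ K * (t * frobNorm G) :=
    (hK _ (by rw [Metric.mem_closedBall, dist_eq_norm]; linarith)).trans
      (mul_le_mul_of_nonneg_left hsub hK0)
  have hF : ‖1 + t • G‖ ≤ 1 + r := by
    refine (norm_add_le _ _).trans (add_le_add Matrix.norm_one_le ?_)
    simpa using hsub.trans hG
  calc t⁻¹ * frobNorm (matGrad w (1 + t • G) * (1 + t • G)ᵀ)
      ≤ t⁻¹ * (9 * (K * (t * frobNorm G)) * (1 + r)) := by
        refine mul_le_mul_of_nonneg_left ((frobNorm_mul_transpose_le _ _).trans ?_)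
          (inv_nonneg.2 ht.le)
        have hKtG : 0 ≤ K * (t * frobNorm G) := (norm_nonneg _).trans hgrad
        norm_num
        gcongr
    _ = 9 * K * (1 + r) * frobNorm G := by field_simp

lemma scaled_stress_le_of_far {k r : ℝ} (hk : 0 ≤ k) (hr : 0 < r) (ht : 0 < t)
    (hG : r < t * frobNorm G)
    (hgrowth : frobNorm (matGrad w (1 + t • G) * (1 + t • G)ᵀ) ≤ k * (w (1 + t • G) + 1)) :
    t⁻¹ * frobNorm (matGrad w (1 + t • G) * (1 + t • G)ᵀ) ≤
      k * (t⁻¹ * w (1 + t • G)) + k / r * frobNorm G := by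
  have ht_inv : t⁻¹ ≤ frobNorm G / r := by
    rw [inv_eq_one_div, div_le_div_iff₀ ht hr]; linarith
  calc t⁻¹ * frobNorm (matGrad w (1 + t • G) * (1 + t • G)ᵀ)
      ≤ t⁻¹ * (k * (w (1 + t • G) + 1)) := by gcongr
    _ = k * (t⁻¹ * w (1 + t • G)) + k * t⁻¹ := by ring
    _ ≤ k * (t⁻¹ * w (1 + t • G)) + k * (frobNorm G / r) := by gcongr
    _ = k * (t⁻¹ * w (1 + t • G)) + k / r * frobNorm G := by ring

theorem frobNorm_scaled_stress_le {k r K : ℝ} (hw : ∀ F, 0 ≤ w F) (hk : 0 ≤ k) (hr : 0 < r)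
    (hK0 : 0 ≤ K) (hK : ∀ F ∈ Metric.closedBall 1 r, ‖matGrad w F‖ ≤ K * ‖F - 1‖)
    (hgrowth : ∀ F : Matrix (Fin 3) (Fin 3) ℝ, 0 < F.det →
      frobNorm (matGrad w F * Fᵀ) ≤ k * (w F + 1))
    (ht : 0 < t) (hdet : 0 < (1 + t • G).det) :
    frobNorm (t⁻¹ • (matGrad w (1 + t • G) * (1 + t • G)ᵀ)) ≤
      (9 * K * (1 + r) + k + k / r) * (t⁻¹ * w (1 + t • G) + frobNorm G) := by
  rw [frobNorm_smul, abs_of_pos (inv_pos.2 ht)]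
  have hW : 0 ≤ t⁻¹ * w (1 + t • G) := mul_nonneg (inv_nonneg.2 ht.le) (hw _)
  have hG := frobNorm_nonneg G
  have hA : 0 ≤ 9 * K * (1 + r) := by positivity
  have hB : 0 ≤ k / r := by positivity
  rcases le_or_gt (t * frobNorm G) r with hnear | hfar
  · nlinarith [scaled_stress_le_of_near hK0 hK ht hnear]
  · nlinarith [scaled_stress_le_of_far hk hr ht hfar (hgrowth _ hdet)]

end Stress

theorem statement2_general (W : Matrix (Fin 3) (Fin 3) ℝ → ℝ≥0∞) (δ k : ℝ) (hδ : 0 < δ) (hk : 0 < k)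
    (hWId : W 1 = 0)
    (hC2 : ContDiffOn ℝ 2 (wr W) {F : Matrix (Fin 3) (Fin 3) ℝ | distSO3 F < δ})
    (hgrowth : ∀ F : Matrix (Fin 3) (Fin 3) ℝ, 0 < F.det →
      frobNorm (matGrad (wr W) F * Fᵀ) ≤ k * (wr W F + 1)) :
    ∃ C > (0:ℝ), ∀ t ∈ Set.Ioc (0:ℝ) 1, ∀ G : Matrix (Fin 3) (Fin 3) ℝ,
      0 < (1 + t • G).det →
      frobNorm (t⁻¹ • (matGrad (wr W) (1 + t • G) * (1 + t • G)ᵀ)) ≤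
        C * (t⁻¹ * wr W (1 + t • G) + frobNorm G) := by
  have hmin : IsLocalMin (wr W) 1 :=
    IsMinOn.isLocalMin (fun F _ => by simp [wr, hWId]) Filter.univ_mem
  obtain ⟨K, r, hr, hK⟩ :=
    hmin.exists_abs_fderiv_apply_le (hC2.contDiffAt (setOf_distSO3_lt_mem_nhds_one hδ))
  refine ⟨9 * K * (1 + r) + k + k / r, by positivity, fun t ht G hdet => ?_⟩
  exact frobNorm_scaled_stress_le (fun _ => ENNReal.toReal_nonneg) hk.le hr K.2
    (fun F hF => norm_matGrad_le (by positivity) (hK F hF)) hgrowth ht.1 hdet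

/-- under the single-well and growth assumptions on `W`, the scaled stress
`E = t⁻¹ DW(Id + tG)(Id + tG)ᵀ` satisfies `|E| ≤ C (t⁻¹ W(Id + tG) + |G|)`. -/
theorem statement2 (W : Matrix (Fin 3) (Fin 3) ℝ → ℝ≥0∞) (δ k : ℝ) (hδ : 0 < δ) (hk : 0 < k)
    (hfin : ∀ F : Matrix (Fin 3) (Fin 3) ℝ, 0 < F.det → W F ≠ ⊤)
    (hC1 : ContDiffOn ℝ 1 (wr W) {F : Matrix (Fin 3) (Fin 3) ℝ | 0 < F.det})
    (hWId : W 1 = 0)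
    (hfinδ : ∀ F : Matrix (Fin 3) (Fin 3) ℝ, distSO3 F < δ → W F ≠ ⊤)
    (hC2 : ContDiffOn ℝ 2 (wr W) {F : Matrix (Fin 3) (Fin 3) ℝ | distSO3 F < δ})
    (hgrowth : ∀ F : Matrix (Fin 3) (Fin 3) ℝ, 0 < F.det →
      frobNorm (matGrad (wr W) F * Fᵀ) ≤ k * (wr W F + 1)) :
    ∃ C > (0:ℝ), ∀ t ∈ Set.Ioc (0:ℝ) 1, ∀ G : Matrix (Fin 3) (Fin 3) ℝ,
      0 < (1 + t • G).det →
      frobNorm (t⁻¹ • (matGrad (wr W) (1 + t • G) * (1 + t • G)ᵀ)) ≤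
        C * (t⁻¹ * wr W (1 + t • G) + frobNorm G) :=
  statement2_general W δ k hδ hk hWId hC2 hgrowth
end
end

section
/- Let Ω ⊆ ℝⁿ be measurable with finite Lebesgue measure and m ≥ 1. For each h let F_h : Ω → ℝ^m be measurable and let χ_h be the indicator function of a measurable set B_h ⊆ Ω. Assume: (i) χ_h F_h ⇀ F weakly in L²(Ω;ℝ^m); (ii) (1−χ_h)F_h → 0 strongly in L¹(Ω;ℝ^m); (iii) ψ_h → ψ strongly in L²(Ω;ℝ^m) and sup_h ‖ψ_h‖_{L^∞(Ω)} < ∞. Then ∫_Ω F_h · ψ_h dx → ∫_Ω F · ψ dx as h → 0. -/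
open Matrix MeasureTheory Filter Topology
open scoped ENNReal RealInnerProductSpace

/-!
Split `F_h = χ_h F_h + (1 - χ_h) F_h`. In the Hilbert space `L²(Ω; EuclideanSpace ℝ (Fin m))` the
weakly convergent sequence `χ_h F_h` is bounded by Banach–Steinhaus, and a bounded sequence whose
pairing with `ψ` converges can be paired with any `ψ_h → ψ` in `L²`. The remainder is at most
`m · K · ‖(1 - χ_h) F_h‖_{L¹}` in absolute value.
-/

theorem norm_dotProduct_le {ι R : Type*} [Fintype ι] [NonUnitalSeminormedRing R] (v w : ι → R) :
    ‖v ⬝ᵥ w‖ ≤ Fintype.card ι * (‖v‖ * ‖w‖) :=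
  calc ‖v ⬝ᵥ w‖ ≤ ∑ i, ‖v i‖ * ‖w i‖ :=
        (norm_sum_le _ _).trans (Finset.sum_le_sum fun i _ => norm_mul_le _ _)
    _ ≤ ∑ _i : ι, ‖v‖ * ‖w‖ := Finset.sum_le_sum fun i _ =>
        mul_le_mul (norm_le_pi_norm v i) (norm_le_pi_norm w i) (norm_nonneg _) (norm_nonneg _)
    _ = Fintype.card ι * (‖v‖ * ‖w‖) := by simp

section WeakStrong

variable {E : Type*} [NormedAddCommGroup E] [InnerProductSpace ℝ E]

theorem exists_norm_le_of_forall_tendsto_inner [CompleteSpace E] {u : ℕ → E}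
    (hu : ∀ w, ∃ a, Tendsto (fun h => ⟪u h, w⟫) atTop (𝓝 a)) : ∃ C, ∀ h, ‖u h‖ ≤ C := by
  obtain ⟨C, hC⟩ := banach_steinhaus (g := fun h => innerSL ℝ (u h)) fun w => by
    obtain ⟨a, ha⟩ := hu w
    obtain ⟨C, hC⟩ := ha.norm.bddAbove_range
    exact ⟨C, fun h => hC ⟨h, rfl⟩⟩
  exact ⟨C, fun h => (innerSL_apply_norm ℝ (u h)).symm.le.trans (hC h)⟩

theorem tendsto_inner_of_norm_le_of_tendsto {ι : Type*} {l : Filter ι} {u v : ι → E} {v₀ : E}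
    {a C : ℝ} (hC : ∀ i, ‖u i‖ ≤ C) (hu : Tendsto (fun i => ⟪u i, v₀⟫) l (𝓝 a))
    (hv : Tendsto v l (𝓝 v₀)) : Tendsto (fun i => ⟪u i, v i⟫) l (𝓝 a) := by
  have hrem : Tendsto (fun i => ⟪u i, v i - v₀⟫) l (𝓝 0) := by
    refine squeeze_zero_norm (fun i => (norm_inner_le_norm _ _).trans
      (mul_le_mul_of_nonneg_right (hC i) (norm_nonneg _))) ?_
    simpa using (tendsto_iff_norm_sub_tendsto_zero.1 hv).const_mul C
  simpa [inner_sub_right] using hu.add hrem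

end WeakStrong

section EuclideanLp

variable {α : Type*} [MeasurableSpace α] {μ : Measure α} {m : ℕ}

/-- `Fin m → ℝ` carries the sup norm, so `L²` of it is not a Hilbert space; this is the same
function in `L²` with values in `EuclideanSpace ℝ (Fin m)`, whose inner product is `∫ f ⬝ᵥ g`. -/
noncomputable def MeasureTheory.MemLp.toEuclideanLp {f : α → Fin m → ℝ} (hf : MemLp f 2 μ) :
    Lp (EuclideanSpace ℝ (Fin m)) 2 μ :=
  ((EuclideanSpace.equiv (Fin m) ℝ).symm.toContinuousLinearMap.comp_memLp' hf).toLp _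

namespace MeasureTheory.MemLp

theorem coeFn_toEuclideanLp {f : α → Fin m → ℝ} (hf : MemLp f 2 μ) :
    hf.toEuclideanLp =ᵐ[μ] fun x => WithLp.toLp 2 (f x) :=
  MemLp.coeFn_toLp _

theorem inner_toEuclideanLp_ae {f g : α → Fin m → ℝ} (hf : MemLp f 2 μ) (hg : MemLp g 2 μ) :
    (fun x => inner ℝ (hf.toEuclideanLp x : EuclideanSpace ℝ (Fin m)) (hg.toEuclideanLp x))
      =ᵐ[μ] fun x => f x ⬝ᵥ g x := by
  filter_upwards [hf.coeFn_toEuclideanLp, hg.coeFn_toEuclideanLp] with x hfx hgx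
  simp [hfx, hgx, EuclideanSpace.inner_toLp_toLp, dotProduct_comm]

theorem integrable_dotProduct {f g : α → Fin m → ℝ} (hf : MemLp f 2 μ) (hg : MemLp g 2 μ) :
    Integrable (fun x => f x ⬝ᵥ g x) μ :=
  (L2.integrable_inner _ _).congr (hf.inner_toEuclideanLp_ae hg)

theorem inner_toEuclideanLp {f g : α → Fin m → ℝ} (hf : MemLp f 2 μ) (hg : MemLp g 2 μ) :
    ⟪hf.toEuclideanLp, hg.toEuclideanLp⟫ = ∫ x, f x ⬝ᵥ g x ∂μ :=
  (L2.inner_def _ _).trans (integral_congr_ae (hf.inner_toEuclideanLp_ae hg))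

theorem toEuclideanLp_sub {f g : α → Fin m → ℝ} (hf : MemLp f 2 μ) (hg : MemLp g 2 μ) :
    (hf.sub hg).toEuclideanLp = hf.toEuclideanLp - hg.toEuclideanLp := by
  ext1
  filter_upwards [(hf.sub hg).coeFn_toEuclideanLp, hf.coeFn_toEuclideanLp,
    hg.coeFn_toEuclideanLp, Lp.coeFn_sub hf.toEuclideanLp hg.toEuclideanLp] with x h h₁ h₂ h₃
  rw [h₃, Pi.sub_apply, h, h₁, h₂, Pi.sub_apply, WithLp.toLp_sub]

theorem norm_toEuclideanLp_sq_le {f : α → Fin m → ℝ} (hf : MemLp f 2 μ) :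
    ‖hf.toEuclideanLp‖ ^ 2 ≤ m * ∫ x, ‖f x‖ ^ 2 ∂μ := by
  rw [← real_inner_self_eq_norm_sq, inner_toEuclideanLp, ← integral_const_mul]
  refine integral_mono (hf.integrable_dotProduct hf) (hf.norm.integrable_sq.const_mul _)
    fun x => ?_
  simpa [sq] using (le_abs_self _).trans (norm_dotProduct_le (f x) (f x))

end MeasureTheory.MemLp

theorem MeasureTheory.Lp.exists_toEuclideanLp_eq (w : Lp (EuclideanSpace ℝ (Fin m)) 2 μ) :
    ∃ (Φ : α → Fin m → ℝ) (hΦ : MemLp Φ 2 μ), hΦ.toEuclideanLp = w := by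
  have hΦ := (EuclideanSpace.equiv (Fin m) ℝ).toContinuousLinearMap.comp_memLp' (Lp.memLp w)
  refine ⟨_, hΦ, ?_⟩
  ext1
  filter_upwards [hΦ.coeFn_toEuclideanLp] with x hx
  exact hx.trans rfl

theorem tendsto_toEuclideanLp {ψ : ℕ → α → Fin m → ℝ} {ψlim : α → Fin m → ℝ}
    (hψ : ∀ h, MemLp (ψ h) 2 μ) (hψlim : MemLp ψlim 2 μ)
    (hconv : Tendsto (fun h => ∫ x, ‖ψ h x - ψlim x‖ ^ 2 ∂μ) atTop (𝓝 0)) :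
    Tendsto (fun h => (hψ h).toEuclideanLp) atTop (𝓝 hψlim.toEuclideanLp) := by
  rw [tendsto_iff_norm_sub_tendsto_zero]
  refine squeeze_zero (fun _ => norm_nonneg _) (fun h => ?_)
    (by simpa only [mul_zero, Real.sqrt_zero] using (hconv.const_mul (m : ℝ)).sqrt)
  rw [← MemLp.toEuclideanLp_sub, ← Real.sqrt_sq (norm_nonneg _)]
  exact Real.sqrt_le_sqrt ((hψ h).sub hψlim).norm_toEuclideanLp_sq_le

theorem tendsto_integral_dotProduct_of_weak_of_tendsto {u ψ : ℕ → α → Fin m → ℝ}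
    {ulim ψlim : α → Fin m → ℝ} (hu : ∀ h, MemLp (u h) 2 μ)
    (hweak : ∀ Φ, MemLp Φ 2 μ →
      Tendsto (fun h => ∫ x, u h x ⬝ᵥ Φ x ∂μ) atTop (𝓝 (∫ x, ulim x ⬝ᵥ Φ x ∂μ)))
    (hψ : ∀ h, MemLp (ψ h) 2 μ) (hψlim : MemLp ψlim 2 μ)
    (hconv : Tendsto (fun h => ∫ x, ‖ψ h x - ψlim x‖ ^ 2 ∂μ) atTop (𝓝 0)) :
    Tendsto (fun h => ∫ x, u h x ⬝ᵥ ψ h x ∂μ) atTop (𝓝 (∫ x, ulim x ⬝ᵥ ψlim x ∂μ)) := by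
  obtain ⟨C, hC⟩ := exists_norm_le_of_forall_tendsto_inner (u := fun h => (hu h).toEuclideanLp)
    fun w => by
      obtain ⟨Φ, hΦ, rfl⟩ := Lp.exists_toEuclideanLp_eq w
      exact ⟨_, by simpa only [MemLp.inner_toEuclideanLp] using hweak Φ hΦ⟩
  simpa only [MemLp.inner_toEuclideanLp] using tendsto_inner_of_norm_le_of_tendsto hC
    (by simpa only [MemLp.inner_toEuclideanLp] using hweak ψlim hψlim)
    (tendsto_toEuclideanLp hψ hψlim hconv)

end EuclideanLp

section BoundedFactor

variable {α : Type*} [MeasurableSpace α] {μ : Measure α} {m : ℕ}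

theorem lintegral_enorm_dotProduct_le {G ψ : α → Fin m → ℝ} {K : ℝ}
    (hK : ∀ᵐ x ∂μ, ‖ψ x‖ ≤ K) :
    ∫⁻ x, ‖G x ⬝ᵥ ψ x‖ₑ ∂μ ≤ ENNReal.ofReal (m * K) * ∫⁻ x, ‖G x‖ₑ ∂μ := by
  rw [← lintegral_const_mul' _ _ ENNReal.ofReal_ne_top]
  refine lintegral_mono_ae (hK.mono fun x hx => ?_)
  have hmK : 0 ≤ (m : ℝ) * K := mul_nonneg m.cast_nonneg ((norm_nonneg _).trans hx)
  rw [← ofReal_norm, ← ofReal_norm, ← ENNReal.ofReal_mul hmK]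
  refine ENNReal.ofReal_le_ofReal ((norm_dotProduct_le _ _).trans ?_)
  rw [Fintype.card_fin]
  nlinarith [mul_le_mul_of_nonneg_left hx
    (mul_nonneg (m.cast_nonneg : (0 : ℝ) ≤ m) (norm_nonneg (G x)))]

theorem MeasureTheory.Integrable.dotProduct_of_norm_le {G ψ : α → Fin m → ℝ} {K : ℝ}
    (hG : Integrable G μ) (hψ : AEStronglyMeasurable ψ μ) (hK : ∀ᵐ x ∂μ, ‖ψ x‖ ≤ K) :
    Integrable (fun x => G x ⬝ᵥ ψ x) μ :=
  ⟨(continuous_fst.dotProduct continuous_snd).comp_aestronglyMeasurable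
      (hG.aestronglyMeasurable.prodMk hψ),
    (lintegral_enorm_dotProduct_le hK).trans_lt (ENNReal.mul_lt_top ENNReal.ofReal_lt_top hG.2)⟩

theorem tendsto_integral_dotProduct_of_tendsto_lintegral {ι : Type*} {l : Filter ι}
    {G ψ : ι → α → Fin m → ℝ} {K : ℝ}
    (hG : Tendsto (fun i => ∫⁻ x, ‖G i x‖ₑ ∂μ) l (𝓝 0)) (hK : ∀ i, ∀ᵐ x ∂μ, ‖ψ i x‖ ≤ K) :
    Tendsto (fun i => ∫ x, G i x ⬝ᵥ ψ i x ∂μ) l (𝓝 0) := by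
  rw [tendsto_zero_iff_enorm_tendsto_zero]
  have hbound := ENNReal.Tendsto.const_mul hG (Or.inr (ENNReal.ofReal_ne_top (r := m * K)))
  rw [mul_zero] at hbound
  exact tendsto_of_tendsto_of_tendsto_of_le_of_le tendsto_const_nhds hbound (fun _ => zero_le)
    fun i => (enorm_integral_le_lintegral_enorm _).trans (lintegral_enorm_dotProduct_le (hK i))

end BoundedFactor

theorem statement6_general (n m : ℕ)
    (Ω : Set (Fin n → ℝ))
    (F : ℕ → (Fin n → ℝ) → (Fin m → ℝ)) (hFmeas : ∀ h, Measurable (F h))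
    (B : ℕ → Set (Fin n → ℝ)) (hBmeas : ∀ h, MeasurableSet (B h))
    (Flim : (Fin n → ℝ) → (Fin m → ℝ))
    (hFL2 : ∀ h, MemLp ((B h).indicator (F h)) 2 (volume.restrict Ω))
    (hweak : ∀ Φ : (Fin n → ℝ) → (Fin m → ℝ), MemLp Φ 2 (volume.restrict Ω) →
      Tendsto (fun h => ∫ x in Ω, (B h).indicator (F h) x ⬝ᵥ Φ x) atTop
        (𝓝 (∫ x in Ω, Flim x ⬝ᵥ Φ x)))
    (hL1 : Tendsto (fun h => ∫⁻ x in Ω \ B h, ENNReal.ofReal ‖F h x‖) atTop (𝓝 0))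
    (ψ : ℕ → (Fin n → ℝ) → (Fin m → ℝ)) (ψlim : (Fin n → ℝ) → (Fin m → ℝ))
    (hψL2 : ∀ h, MemLp (ψ h) 2 (volume.restrict Ω))
    (hψlimL2 : MemLp ψlim 2 (volume.restrict Ω))
    (hψconv : Tendsto (fun h => ∫ x in Ω, ‖ψ h x - ψlim x‖ ^ 2) atTop (𝓝 0))
    (K : ℝ) (hK : ∀ h, ∀ᵐ x ∂volume.restrict Ω, ‖ψ h x‖ ≤ K) :
    Tendsto (fun h => ∫ x in Ω, F h x ⬝ᵥ ψ h x) atTop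
      (𝓝 (∫ x in Ω, Flim x ⬝ᵥ ψlim x)) := by
  set μ := volume.restrict Ω
  have hin := tendsto_integral_dotProduct_of_weak_of_tendsto hFL2 hweak hψL2 hψlimL2 hψconv
  have hout : Tendsto (fun h => ∫⁻ x, ‖(B h)ᶜ.indicator (F h) x‖ₑ ∂μ) atTop (𝓝 0) := by
    refine hL1.congr fun h => ?_
    rw [Set.sdiff_eq, Set.inter_comm, ← Measure.restrict_restrict (hBmeas h).compl,
      ← lintegral_indicator (hBmeas h).compl]
    simp_rw [enorm_indicator_eq_indicator_enorm, ofReal_norm]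
    rfl
  have hsplit : ∀ᶠ h in atTop, ∫ x, (B h).indicator (F h) x ⬝ᵥ ψ h x ∂μ
      + ∫ x, (B h)ᶜ.indicator (F h) x ⬝ᵥ ψ h x ∂μ = ∫ x, F h x ⬝ᵥ ψ h x ∂μ := by
    filter_upwards [hout.eventually_lt_const ENNReal.zero_lt_top] with h hfin
    have hGint : Integrable ((B h)ᶜ.indicator (F h)) μ :=
      ⟨((hFmeas h).indicator (hBmeas h).compl).aestronglyMeasurable, hfin⟩
    rw [← integral_add ((hFL2 h).integrable_dotProduct (hψL2 h))
      (hGint.dotProduct_of_norm_le (hψL2 h).1 (hK h))]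
    simp_rw [← add_dotProduct, Set.indicator_self_add_compl_apply]
  simpa using (hin.add (tendsto_integral_dotProduct_of_tendsto_lintegral hout hK)).congr' hsplit

/-- a mixed weak-`L²` / strong-`L¹` convergence lemma: if `χ_h F_h ⇀ F` weakly
in `L²`, `(1-χ_h) F_h → 0` strongly in `L¹`, and `ψ_h → ψ` strongly in `L²` with a uniform
`L^∞` bound, then `∫ F_h · ψ_h → ∫ F · ψ`. -/
theorem statement6 (n m : ℕ) (hm : 1 ≤ m)
    (Ω : Set (Fin n → ℝ)) (hΩm : MeasurableSet Ω) (hΩfin : volume Ω < ⊤)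
    (F : ℕ → (Fin n → ℝ) → (Fin m → ℝ)) (hFmeas : ∀ h, Measurable (F h))
    (B : ℕ → Set (Fin n → ℝ)) (hBmeas : ∀ h, MeasurableSet (B h)) (hBsub : ∀ h, B h ⊆ Ω)
    (Flim : (Fin n → ℝ) → (Fin m → ℝ))
    (hFL2 : ∀ h, MemLp ((B h).indicator (F h)) 2 (volume.restrict Ω))
    (hFlimL2 : MemLp Flim 2 (volume.restrict Ω))
    (hweak : ∀ Φ : (Fin n → ℝ) → (Fin m → ℝ), MemLp Φ 2 (volume.restrict Ω) →
      Tendsto (fun h => ∫ x in Ω, (B h).indicator (F h) x ⬝ᵥ Φ x) atTop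
        (𝓝 (∫ x in Ω, Flim x ⬝ᵥ Φ x)))
    (hL1 : Tendsto (fun h => ∫⁻ x in Ω \ B h, ENNReal.ofReal ‖F h x‖) atTop (𝓝 0))
    (ψ : ℕ → (Fin n → ℝ) → (Fin m → ℝ)) (ψlim : (Fin n → ℝ) → (Fin m → ℝ))
    (hψL2 : ∀ h, MemLp (ψ h) 2 (volume.restrict Ω))
    (hψlimL2 : MemLp ψlim 2 (volume.restrict Ω))
    (hψconv : Tendsto (fun h => ∫ x in Ω, ‖ψ h x - ψlim x‖ ^ 2) atTop (𝓝 0))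
    (K : ℝ) (hK : ∀ h, ∀ᵐ x ∂volume.restrict Ω, ‖ψ h x‖ ≤ K) :
    Tendsto (fun h => ∫ x in Ω, F h x ⬝ᵥ ψ h x) atTop
      (𝓝 (∫ x in Ω, Flim x ⬝ᵥ ψlim x)) :=
  statement6_general n m Ω F hFmeas B hBmeas Flim hFL2 hweak hL1 ψ ψlim hψL2 hψlimL2 hψconv K hK
end

section
/- For every F ∈ M^{3×3} with det F > 0, the Frobenius distance of F to SO(3) satisfies dist(F, SO(3)) = |(FᵀF)^{1/2} − Id|, where (FᵀF)^{1/2} denotes the unique symmetric positive definite square root of FᵀF. -/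
open Matrix MeasureTheory Filter Topology
open scoped ENNReal

noncomputable section

attribute [local instance] Matrix.normedAddCommGroup Matrix.normedSpace

/-!
Polar decomposition: if `B` is the positive definite square root of `FᵀF`, then `R₀ := F B⁻¹`
is orthogonal, and `det F > 0` forces `R₀ ∈ SO(3)`. Rotating by `R₀ᵀ` gives
`|F - R| = |B - Q|` with `Q = R₀ᵀR` orthogonal, and `|B - Q|² = |B|² - 2 tr (B Q) + 3`.
The bound `tr (B Q) ≤ tr B` follows from `0 ≤ |Q C - C|² = 2 (tr B - tr (B Q))`, where
`C = B^{1/2}`; hence `|F - R| ≥ |B - 1|`, with equality at `R = R₀`.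
-/

namespace Matrix

variable {n : ℕ}

open scoped MatrixOrder in
theorem PosSemidef.exists_isSymm_mul_self_eq {B : Matrix (Fin n) (Fin n) ℝ} (hB : B.PosSemidef) :
    ∃ C : Matrix (Fin n) (Fin n) ℝ, C.IsSymm ∧ C.PosSemidef ∧ C * C = B :=
  have hC : (CFC.sqrt B).PosSemidef := (CFC.sqrt_nonneg B).posSemidef
  ⟨CFC.sqrt B, isHermitian_iff_isSymm.mp hC.isHermitian, hC, CFC.sqrt_mul_sqrt_self B hB.nonneg⟩

open scoped MatrixOrder in
theorem PosDef.existsUnique_isSymm_posDef_mul_self_eq {A : Matrix (Fin n) (Fin n) ℝ}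
    (hA : A.PosDef) : ∃! B : Matrix (Fin n) (Fin n) ℝ, B.IsSymm ∧ B.PosDef ∧ B * B = A := by
  obtain ⟨C, hCsymm, hC, hCC⟩ := hA.posSemidef.exists_isSymm_mul_self_eq
  have hCdet : C.det ≠ 0 := fun h => hA.det_pos.ne' (by rw [← hCC, det_mul, h, zero_mul])
  refine ⟨C, ⟨hCsymm, hC.posDef_iff_det_ne_zero.mpr hCdet, hCC⟩, ?_⟩
  rintro B ⟨-, hB, hBB⟩
  exact (CFC.mul_self_eq_mul_self_iff B C hB.posSemidef.nonneg hC.nonneg).mp (hBB.trans hCC.symm)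

end Matrix

section Frobenius

variable {n : ℕ}

theorem frobInner_comm (A B : Matrix (Fin n) (Fin n) ℝ) : frobInner A B = frobInner B A := by
  simp only [frobInner, mul_comm]

theorem frobInner_eq_trace (A B : Matrix (Fin n) (Fin n) ℝ) : frobInner A B = (Aᵀ * B).trace := by
  simp only [frobInner, trace, diag, mul_apply, transpose_apply]
  rw [Finset.sum_comm]

theorem frobInner_self_nonneg (A : Matrix (Fin n) (Fin n) ℝ) : 0 ≤ frobInner A A :=
  Finset.sum_nonneg fun _ _ => Finset.sum_nonneg fun _ _ => mul_self_nonneg _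

theorem frobInner_sub_sub (A B : Matrix (Fin n) (Fin n) ℝ) :
    frobInner (A - B) (A - B) = frobInner A A - 2 * frobInner A B + frobInner B B := by
  simp only [frobInner, Matrix.sub_apply, Finset.mul_sum, ← Finset.sum_sub_distrib,
    ← Finset.sum_add_distrib]
  exact Finset.sum_congr rfl fun _ _ => Finset.sum_congr rfl fun _ _ => by ring

theorem frobInner_mul_mul_of_orthogonal {Q : Matrix (Fin n) (Fin n) ℝ} (hQ : Qᵀ * Q = 1)
    (A B : Matrix (Fin n) (Fin n) ℝ) : frobInner (Q * A) (Q * B) = frobInner A B := by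
  rw [frobInner_eq_trace, frobInner_eq_trace, transpose_mul,
    show Aᵀ * Qᵀ * (Q * B) = Aᵀ * (Qᵀ * Q) * B by simp only [Matrix.mul_assoc], hQ, Matrix.mul_one]

theorem frobNorm_mul_of_orthogonal {Q : Matrix (Fin n) (Fin n) ℝ} (hQ : Qᵀ * Q = 1)
    (A : Matrix (Fin n) (Fin n) ℝ) : frobNorm (Q * A) = frobNorm A := by
  rw [frobNorm, frobNorm, frobInner_mul_mul_of_orthogonal hQ]

theorem Matrix.PosSemidef.frobInner_le_trace_of_orthogonal {B Q : Matrix (Fin n) (Fin n) ℝ}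
    (hB : B.PosSemidef) (hQ : Qᵀ * Q = 1) : frobInner B Q ≤ B.trace := by
  obtain ⟨C, hCsymm, -, rfl⟩ := hB.exists_isSymm_mul_self_eq
  have hCQC : frobInner (C * C) Q = frobInner C (Q * C) := by
    rw [frobInner_eq_trace, frobInner_eq_trace, hCsymm.eq, transpose_mul, hCsymm.eq,
      Matrix.mul_assoc, trace_mul_comm, Matrix.mul_assoc]
  have hCC : (C * C).trace = frobInner C C := by rw [frobInner_eq_trace, hCsymm.eq]
  have := frobInner_self_nonneg (Q * C - C)
  rw [frobInner_sub_sub, frobInner_mul_mul_of_orthogonal hQ, frobInner_comm (Q * C)] at this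
  linarith

theorem Matrix.PosSemidef.frobNorm_sub_one_le_of_orthogonal {B Q : Matrix (Fin n) (Fin n) ℝ}
    (hB : B.PosSemidef) (hQ : Qᵀ * Q = 1) : frobNorm (B - 1) ≤ frobNorm (B - Q) := by
  have hQQ : frobInner Q Q = frobInner (1 : Matrix (Fin n) (Fin n) ℝ) 1 := by
    simpa using frobInner_mul_mul_of_orthogonal hQ 1 1
  have hB1 : frobInner B 1 = B.trace := by
    rw [frobInner_eq_trace, Matrix.mul_one, trace_transpose]
  refine Real.sqrt_le_sqrt ?_
  rw [frobInner_sub_sub, frobInner_sub_sub, hQQ, hB1]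
  linarith [hB.frobInner_le_trace_of_orthogonal hQ]

theorem Matrix.PosSemidef.frobNorm_sub_one_le_mul_sub_of_orthogonal
    {R₀ B R : Matrix (Fin n) (Fin n) ℝ} (hB : B.PosSemidef) (hR₀ : R₀ᵀ * R₀ = 1)
    (hR : Rᵀ * R = 1) : frobNorm (B - 1) ≤ frobNorm (R₀ * B - R) := by
  have hR₀R₀ : R₀ * R₀ᵀ = 1 := mul_eq_one_comm.mp hR₀
  have hQ : (R₀ᵀ * R)ᵀ * (R₀ᵀ * R) = 1 := by
    rw [transpose_mul, transpose_transpose,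
      show Rᵀ * R₀ * (R₀ᵀ * R) = Rᵀ * (R₀ * R₀ᵀ) * R by simp only [Matrix.mul_assoc],
      hR₀R₀, Matrix.mul_one, hR]
  have hrot : R₀ * B - R = R₀ * (B - R₀ᵀ * R) := by
    rw [Matrix.mul_sub, ← Matrix.mul_assoc, hR₀R₀, Matrix.one_mul]
  rw [hrot, frobNorm_mul_of_orthogonal hR₀]
  exact hB.frobNorm_sub_one_le_of_orthogonal hQ

end Frobenius

theorem exists_mem_SO3_eq_mul {F B : Matrix (Fin 3) (Fin 3) ℝ} (hF : 0 < F.det) (hB : B.PosDef)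
    (hBB : B * B = Fᵀ * F) : ∃ R ∈ SO3, F = R * B := by
  have hBdet : IsUnit B.det := hB.det_pos.ne'.isUnit
  have hBinv : B⁻¹ᵀ = B⁻¹ := by
    rw [transpose_nonsing_inv, isHermitian_iff_isSymm.mp hB.isHermitian]
  have hFR : F = F * B⁻¹ * B := by rw [Matrix.mul_assoc, nonsing_inv_mul B hBdet, Matrix.mul_one]
  have horth : (F * B⁻¹)ᵀ * (F * B⁻¹) = 1 := by
    rw [transpose_mul, hBinv,
      show B⁻¹ * Fᵀ * (F * B⁻¹) = B⁻¹ * (Fᵀ * F) * B⁻¹ by simp only [Matrix.mul_assoc], ← hBB,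
      show B⁻¹ * (B * B) * B⁻¹ = B⁻¹ * B * (B * B⁻¹) by simp only [Matrix.mul_assoc],
      nonsing_inv_mul B hBdet, mul_nonsing_inv B hBdet, Matrix.mul_one]
  have hsq : (F * B⁻¹).det * (F * B⁻¹).det = 1 := by
    have := congrArg det horth
    rwa [det_mul, det_transpose, det_one] at this
  have hpos : 0 < (F * B⁻¹).det := by
    rw [det_mul, det_nonsing_inv, Ring.inverse_eq_inv]
    exact mul_pos hF (inv_pos.mpr hB.det_pos)
  exact ⟨F * B⁻¹, ⟨horth, by nlinarith⟩, hFR⟩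

/-- for `det F > 0`, `dist(F, SO(3)) = |(FᵀF)^{1/2} - Id|`, where `(FᵀF)^{1/2}`
is the unique symmetric positive definite square root of `FᵀF`. -/
theorem statement9 (F : Matrix (Fin 3) (Fin 3) ℝ) (hF : 0 < F.det) :
    (∃! B : Matrix (Fin 3) (Fin 3) ℝ, B.IsSymm ∧ B.PosDef ∧ B * B = Fᵀ * F) ∧
    ∀ B : Matrix (Fin 3) (Fin 3) ℝ, B.IsSymm → B.PosDef → B * B = Fᵀ * F →
      distSO3 F = frobNorm (B - 1) := by
  have hFF : (Fᵀ * F).PosDef := by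
    simpa using PosDef.conjTranspose_mul_self F (mulVec_injective_of_det_ne_zero hF.ne')
  refine ⟨hFF.existsUnique_isSymm_posDef_mul_self_eq, fun B _ hB hBB => ?_⟩
  obtain ⟨R₀, hR₀, rfl⟩ := exists_mem_SO3_eq_mul hF hB hBB
  refine IsLeast.csInf_eq ⟨⟨R₀, hR₀, ?_⟩, ?_⟩
  · dsimp only
    rw [show R₀ * B - R₀ = R₀ * (B - 1) by rw [Matrix.mul_sub, Matrix.mul_one],
      frobNorm_mul_of_orthogonal hR₀.1]
  · rintro _ ⟨R, hR, rfl⟩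
    exact hB.posSemidef.frobNorm_sub_one_le_mul_sub_of_orthogonal hR₀.1 hR.1
end
end
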